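/- Let Σ = {a,b} and E = (a|a)*. Then the Java-style pNFA Jp(E) has exponential backtracking, witnessed by the family {aⁿb : n ∈ ℕ}: the function n ↦ |btr_{Jp(E)}(aⁿb)| is in 2^{Ω(n)}, i.e., there exist c > 1 and N such that |btr_{Jp(E)}(aⁿb)| ≥ cⁿ for all n ≥ N. -/

import Mathlib

/-!
From the initial state 3 of `Jp((a|a)*)`, the run on `a·w` first tries the alternation branch
through state 2 and then the one through state 4; each reads `a` and restarts from state 3 on `w`
with fresh counters. On `aⁿb` every run fails, since nothing consumes the final `b`, so both
branches are explored in full: the run on `aⁿ⁺¹b` contains two copies of the run on `aⁿb`,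
and the size at least doubles with every `a`.
-/

/-! ## Finite ordered trees -/

inductive OTree (α : Type) : Type where
  | node : α → List (OTree α) → OTree α

namespace OTree

/-- Number of nodes of a tree. -/
def size {α : Type} : OTree α → ℕ
  | node _ ts => 1 + (ts.attach.map (fun x => size x.1)).sum
decreasing_by
  have := List.sizeOf_lt_of_mem x.2
  simp only [OTree.node.sizeOf_spec]
  omega

/-- Does some label in the tree satisfy `p`? -/
def anyLabel {α : Type} (p : α → Bool) : OTree α → Bool
  | node l ts => p l || ts.attach.any (fun x => anyLabel p x.1)
decreasing_by
  have := List.sizeOf_lt_of_mem x.2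
  simp only [OTree.node.sizeOf_spec]
  omega

/-- Rank: maximum number of children of a node. -/
def rank {α : Type} : OTree α → ℕ
  | node _ ts => max ts.length ((ts.attach.map (fun x => rank x.1)).foldr max 0)
decreasing_by
  have := List.sizeOf_lt_of_mem x.2
  simp only [OTree.node.sizeOf_spec]
  omega

/-- Root label. -/
def root {α : Type} : OTree α → α
  | node l _ => l

end OTree

/-! ## Prioritized NFA -/

/-- A prioritized NFA over alphabet `A` with state set `Q`.  `isQ2 q = true` means `q ∈ Q₂`
(the ε-states); `isQ2 q = false` means `q ∈ Q₁`.  `d1` is the (partial) deterministic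
transition function on `Q₁`, `d2` the prioritized ε-transition function on `Q₂`
(the list order gives the priorities), `final` the set of final states. -/
structure PNFA (A Q : Type) where
  isQ2 : Q → Bool
  init : Q
  d1 : Q → A → Option Q
  d2 : Q → List Q
  final : Q → Bool

/-- Labels of nodes of backtracking runs: states, `acc` and `rej`. -/
inductive BLab (Q : Type) : Type where
  | st : Q → BLab Q
  | acc : BLab Q
  | rej : BLab Q

/-- A backtracking run succeeds iff `acc` occurs in it. -/
def OTree.succeeds {Q : Type} (t : OTree (BLab Q)) : Bool :=
  t.anyLabel (fun l => match l with | BLab.acc => true | _ => false)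

/-- Keep the children trees up to and including the first succeeding one
(all of them if none succeeds). -/
def firstSucc {Q : Type} : List (OTree (BLab Q)) → List (OTree (BLab Q))
  | [] => []
  | t :: ts => if t.succeeds then [t] else t :: firstSucc ts

/-- Termination measure for ε-recursions. -/
def cMeasure {A Q : Type} [Fintype Q] (M : PNFA A Q) (C : Q → ℕ) : ℕ :=
  ∑ q : Q, ((M.d2 q).length - min (C q) (M.d2 q).length)

/-- The `(q,w,C)`-backtracking run of the pNFA `M`. -/
def btr {A Q : Type} [DecidableEq Q] [Fintype Q] (M : PNFA A Q) (q : Q) (w : List A)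
    (C : Q → ℕ) : OTree (BLab Q) :=
  if M.final q = true ∧ w.isEmpty = true then .node (.st q) [.node .acc []]
  else if M.isQ2 q = true then
    if hik : (M.d2 q).length < C q + 1 then .node (.st q) [.node .rej []]
    else
      .node (.st q) (firstSucc ((List.range' (C q + 1) ((M.d2 q).length - C q)).attach.map
        (fun x => btr M ((M.d2 q)[x.1 - 1]'(by
            have hx := x.2; rw [List.mem_range'_1] at hx; omega)) w
          (Function.update C q x.1))))
  else
    match w with
    | [] => .node (.st q) [.node .rej []]
    | a :: w' =>
      match M.d1 q a with
      | some q' => .node (.st q) [btr M q' w' (fun _ => 0)]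
      | none => .node (.st q) [.node .rej []]
termination_by (w.length, cMeasure M C)
decreasing_by
  · apply Prod.Lex.right
    have hx := x.2; rw [List.mem_range'_1] at hx
    apply Finset.sum_lt_sum
    · intro p _
      by_cases hp : p = q
      · subst hp; simp only [Function.update_self]; omega
      · simp only [Function.update_of_ne hp]; omega
    · exact ⟨q, Finset.mem_univ q, by simp only [Function.update_self]; omega⟩
  · apply Prod.Lex.left
    simp

/-- The backtracking run of `M` on `w`. -/
def btrW {A Q : Type} [DecidableEq Q] [Fintype Q] (M : PNFA A Q) (w : List A) :
    OTree (BLab Q) :=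
  btr M M.init w (fun _ => 0)

/-! ## NFA with ε-transitions -/

/-- An NFA with ε-transitions (`none` plays the role of ε). -/
structure ENFA (A Q : Type) where
  init : Q
  tr : Q → Option A → Set Q
  F : Set Q

namespace ENFA

inductive Steps {A Q : Type} (N : ENFA A Q) : Q → List A → Q → Prop
  | refl (q : Q) : Steps N q [] q
  | eps {p q r : Q} {w : List A} : q ∈ N.tr p none → Steps N q w r → Steps N p w r
  | sym {p q r : Q} {a : A} {w : List A} :
      q ∈ N.tr p (some a) → Steps N q w r → Steps N p (a :: w) r

/-- The language accepted by the ε-NFA. -/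
def Lang {A Q : Type} (N : ENFA A Q) : Set (List A) :=
  {w | ∃ q, q ∈ N.F ∧ N.Steps N.init w q}

end ENFA

/-- The NFA `Ā` corresponding to a pNFA (forget priorities). -/
def PNFA.toENFA {A Q : Type} (M : PNFA A Q) : ENFA A Q where
  init := M.init
  tr q o :=
    match o with
    | some a => if M.isQ2 q then ∅ else {q' | M.d1 q a = some q'}
    | none => if M.isQ2 q then {q' | q' ∈ M.d2 q} else ∅
  F := {q | M.final q = true}

/-! ## Growth conditions -/

/-- `f` grows exponentially, i.e. `f ∈ 2^{Ω(n)}`. -/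
def ExpGrowth (f : ℕ → ℕ) : Prop :=
  ∃ c : ℝ, 1 < c ∧ ∃ N : ℕ, ∀ n ≥ N, c ^ n ≤ (f n : ℝ)

/-- `f(n) = max {|btr_M(w)| : |w| ≤ n}` (the alphabet being finite, the set below is a
nonempty bounded set of naturals, so `sSup` is its maximum). -/
noncomputable def btrMax {A Q : Type} [Fintype A] [DecidableEq Q] [Fintype Q]
    (M : PNFA A Q) (n : ℕ) : ℕ :=
  sSup {m | ∃ w : List A, w.length ≤ n ∧ m = (btrW M w).size}

/-! ## Regular expressions (with greedy and lazy Kleene star) -/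

inductive RE (A : Type) : Type where
  | zero : RE A
  | eps : RE A
  | ch : A → RE A
  | cat : RE A → RE A → RE A
  | alt : RE A → RE A → RE A
  | star : RE A → RE A
  | lazyStar : RE A → RE A

/-- The language denoted by a regular expression (the lazy star has the same
language as the greedy star). -/
def RE.lang {A : Type} : RE A → Language A
  | .zero => 0
  | .eps => 1
  | .ch a => {[a]}
  | .cat e1 e2 => e1.lang * e2.lang
  | .alt e1 e2 => e1.lang + e2.lang
  | .star e => KStar.kstar e.lang
  | .lazyStar e => KStar.kstar e.lang

/-! ## The prioritized Thompson and Java constructions -/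

/-- Raw automaton data over the state space ℕ (used to assemble the constructions;
states are allocated from a counter, so the pieces have disjoint state sets). -/
structure RawA (A : Type) where
  isQ2 : ℕ → Bool
  d1 : ℕ → A → Option ℕ
  d2 : ℕ → List ℕ

namespace RawA

/-- The raw automaton with no states/transitions. -/
def empty {A : Type} : RawA A where
  isQ2 _ := false
  d1 _ _ := none
  d2 _ := []

/-- Disjoint union of two raw automata. -/
def merge {A : Type} (M1 M2 : RawA A) : RawA A where
  isQ2 q := M1.isQ2 q || M2.isQ2 q
  d1 q a := (M1.d1 q a).orElse (fun _ => M2.d1 q a)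
  d2 q := M1.d2 q ++ M2.d2 q

/-- A single `Q₂`-state `q` with prioritized ε-transitions to `l`. -/
def epsNode {A : Type} (q : ℕ) (l : List ℕ) : RawA A where
  isQ2 p := p == q
  d1 _ _ := none
  d2 p := if p = q then l else []

/-- A single `Q₁`-state `q` reading `a` and moving to `f`. -/
def chNode {A : Type} [DecidableEq A] (q f : ℕ) (a : A) : RawA A where
  isQ2 _ := false
  d1 p x := if p = q ∧ x = a then some f else none
  d2 _ := []

/-- Identify state `a` with state `b` (state `a` is replaced by `b` everywhere). -/
def rename {A : Type} (M : RawA A) (a b : ℕ) : RawA A where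
  isQ2 q := if q = b then M.isQ2 a else if q = a then false else M.isQ2 q
  d1 q x := (if q = b then M.d1 a x else if q = a then none else M.d1 q x).map
      (fun r => if r = a then b else r)
  d2 q := (if q = b then M.d2 a else if q = a then [] else M.d2 q).map
      (fun r => if r = a then b else r)

end RawA

/-- The prioritized Thompson construction.  `thpAux e n` builds, using fresh states
`n, n+1, …`, the quadruple (raw automaton, initial state, final state, next fresh state). -/
def thpAux {A : Type} [DecidableEq A] : RE A → ℕ → RawA A × ℕ × ℕ × ℕ
  | .zero, n => (RawA.empty, n, n + 1, n + 2)
  | .eps, n => (RawA.epsNode n [n + 1], n, n + 1, n + 2)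
  | .ch a, n => (RawA.chNode n (n + 1) a, n, n + 1, n + 2)
  | .cat e1 e2, n =>
    let r1 := thpAux e1 n
    let r2 := thpAux e2 r1.2.2.2
    -- identify the final state of the first part with the initial state of the second
    (r1.1.merge (r2.1.rename r2.2.1 r1.2.2.1), r1.2.1, r2.2.2.1, r2.2.2.2)
  | .alt e1 e2, n =>
    let r1 := thpAux e1 (n + 2)
    let r2 := thpAux e2 r1.2.2.2
    (((r1.1.merge r2.1).merge (RawA.epsNode n [r1.2.1, r2.2.1])).merge
        ((RawA.epsNode r1.2.2.1 [n + 1]).merge (RawA.epsNode r2.2.2.1 [n + 1])),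
      n, n + 1, r2.2.2.2)
  | .star e1, n =>
    let r1 := thpAux e1 (n + 2)
    ((r1.1.merge (RawA.epsNode n [r1.2.1, n + 1])).merge
        (RawA.epsNode r1.2.2.1 [r1.2.1, n + 1]), n, n + 1, r1.2.2.2)
  | .lazyStar e1, n =>
    let r1 := thpAux e1 (n + 2)
    ((r1.1.merge (RawA.epsNode n [n + 1, r1.2.1])).merge
        (RawA.epsNode r1.2.2.1 [n + 1, r1.2.1]), n, n + 1, r1.2.2.2)

/-- The Java construction.  `jpAux e n` builds, using fresh states `n, n+1, …`,
the quadruple (raw automaton, initial state, final state, next fresh state). -/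
def jpAux {A : Type} [DecidableEq A] : RE A → ℕ → RawA A × ℕ × ℕ × ℕ
  | .zero, n => (RawA.empty, n, n + 1, n + 2)
  | .eps, n => (RawA.epsNode n [n + 1], n, n + 1, n + 2)
  | .ch a, n => (RawA.chNode n (n + 1) a, n, n + 1, n + 2)
  | .cat e1 e2, n =>
    let r1 := jpAux e1 (n + 1)
    let r2 := jpAux e2 r1.2.2.2
    -- identify the initial state of the second part with the final state of the first,
    -- add a new initial state `n` with a single ε-transition to the first part
    ((r1.1.merge (r2.1.rename r2.2.1 r1.2.2.1)).merge (RawA.epsNode n [r1.2.1]),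
      n, r2.2.2.1, r2.2.2.2)
  | .alt e1 e2, n =>
    let r1 := jpAux e1 (n + 1)
    let r2 := jpAux e2 r1.2.2.2
    -- identify the two final states; new initial state `n` with δ₂(n) = [q1, q2]
    ((r1.1.merge (r2.1.rename r2.2.2.1 r1.2.2.1)).merge (RawA.epsNode n [r1.2.1, r2.2.1]),
      n, r1.2.2.1, r2.2.2.2)
  | .star e1, n =>
    let r1 := jpAux e1 (n + 1)
    -- new final state `n`; the initial state is the final state of the body,
    -- with δ₂ = [body-initial, new final]
    (r1.1.merge (RawA.epsNode r1.2.2.1 [r1.2.1, n]), r1.2.2.1, n, r1.2.2.2)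
  | .lazyStar e1, n =>
    let r1 := jpAux e1 (n + 1)
    (r1.1.merge (RawA.epsNode r1.2.2.1 [n, r1.2.1]), r1.2.2.1, n, r1.2.2.2)

/-- Package a raw automaton as a pNFA on the finite state space `Fin (n+1)`. -/
def RawA.toPNFA {A : Type} (R : RawA A) (n q0 f0 : ℕ) : PNFA A (Fin (n + 1)) where
  isQ2 q := R.isQ2 q.1
  init := if h : q0 < n + 1 then ⟨q0, h⟩ else ⟨0, Nat.succ_pos n⟩
  d1 q a := (R.d1 q.1 a).bind (fun m => if h : m < n + 1 then some ⟨m, h⟩ else none)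
  d2 q := (R.d2 q.1).filterMap (fun m => if h : m < n + 1 then some ⟨m, h⟩ else none)
  final q := q.1 == f0

/-- The pNFA `Thp(E)` of the prioritized Thompson construction. -/
def thp {A : Type} [DecidableEq A] (e : RE A) : PNFA A (Fin ((thpAux e 0).2.2.2 + 1)) :=
  (thpAux e 0).1.toPNFA (thpAux e 0).2.2.2 (thpAux e 0).2.1 (thpAux e 0).2.2.1

/-- The pNFA `Jp(E)` of the Java construction. -/
def jp {A : Type} [DecidableEq A] (e : RE A) : PNFA A (Fin ((jpAux e 0).2.2.2 + 1)) :=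
  (jpAux e 0).1.toPNFA (jpAux e 0).2.2.2 (jpAux e 0).2.1 (jpAux e 0).2.2.1

/-- The two-letter alphabet Σ = {a, b}. -/
inductive AB : Type where
  | a : AB
  | b : AB
deriving DecidableEq

def rejLeaf {Q : Type} : OTree (BLab Q) := .node .rej []

namespace OTree

variable {Q : Type}

theorem size_node {α : Type} (l : α) (ts : List (OTree α)) :
    (node l ts).size = 1 + (ts.map size).sum := by
  rw [size, List.attach_map_val]

theorem succeeds_node_st (q : Q) (ts : List (OTree (BLab Q))) :
    (node (.st q) ts).succeeds = ts.any succeeds := by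
  simp only [succeeds, anyLabel, List.any_subtype, List.unattach_attach, Bool.false_or]
  rfl

theorem succeeds_rejLeaf : (rejLeaf : OTree (BLab Q)).succeeds = false := by
  simp [rejLeaf, succeeds, anyLabel]

end OTree

theorem firstSucc_eq_self {Q : Type} {ts : List (OTree (BLab Q))}
    (h : ∀ t ∈ ts, t.succeeds = false) : firstSucc ts = ts := by
  induction ts with
  | nil => rfl
  | cons t ts ih =>
    simp only [List.mem_cons, forall_eq_or_imp] at h
    rw [firstSucc, h.1, if_neg Bool.false_ne_true, ih h.2]

section btr

variable {A Q : Type} [DecidableEq Q] [Fintype Q] (M : PNFA A Q) {q : Q} (x : A) (w : List A)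
  (C : Q → ℕ)

theorem btr_cons_of_d2_eq_pair {p₁ p₂ : Q} (hq : M.isQ2 q = true) (hd : M.d2 q = [p₁, p₂])
    (hC : C q = 0) :
    btr M q (x :: w) C = .node (.st q)
      (firstSucc [btr M p₁ (x :: w) (Function.update C q 1),
        btr M p₂ (x :: w) (Function.update C q 2)]) := by
  rw [btr]
  simp [hq, hd, hC, List.range', List.attach, List.attachWith]

theorem btr_cons_of_d1_eq_some {q' : Q} (hq : M.isQ2 q = false) (hd : M.d1 q x = some q') :
    btr M q (x :: w) C = .node (.st q) [btr M q' w (fun _ => 0)] := by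
  rw [btr]
  simp [hq, hd]

theorem btr_cons_of_d1_eq_none (hq : M.isQ2 q = false) (hd : M.d1 q x = none) :
    btr M q (x :: w) C = .node (.st q) [rejLeaf] := by
  rw [btr]
  simp [hq, hd, rejLeaf]

end btr

/- State layout of `Jp((a|a)*)`: the initial state 3 has δ₂ = [1, 0], the alternation state 1
has δ₂ = [2, 4], the states 2 and 4 read `a` into 3, and the final state 0 has no transitions. -/
abbrev aOrAStarJp : PNFA AB (Fin 7) := jp (RE.star (RE.alt (RE.ch AB.a) (RE.ch AB.a)))

def starAltRun (t : OTree (BLab (Fin 7))) : OTree (BLab (Fin 7)) :=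
  .node (.st 3) [.node (.st 1) [.node (.st 2) [t], .node (.st 4) [t]], .node (.st 0) [rejLeaf]]

theorem succeeds_starAltRun (t : OTree (BLab (Fin 7))) :
    (starAltRun t).succeeds = t.succeeds := by
  simp [starAltRun, OTree.succeeds_node_st, OTree.succeeds_rejLeaf]

theorem size_starAltRun (t : OTree (BLab (Fin 7))) :
    (starAltRun t).size = 2 * t.size + 6 := by
  simp only [starAltRun, rejLeaf, OTree.size_node, List.map_cons, List.map_nil, List.sum_cons,
    List.sum_nil]
  ring

theorem btr_aOrAStarJp_three_cons (x : AB) (w : List AB) (t : OTree (BLab (Fin 7)))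
    (h2 : ∀ C, btr aOrAStarJp 2 (x :: w) C = .node (.st 2) [t])
    (h4 : ∀ C, btr aOrAStarJp 4 (x :: w) C = .node (.st 4) [t]) (ht : t.succeeds = false) :
    btr aOrAStarJp 3 (x :: w) (fun _ => 0) = starAltRun t := by
  have hd0 : aOrAStarJp.d1 0 x = none := by cases x <;> rfl
  rw [btr_cons_of_d2_eq_pair (q := 3) (p₁ := 1) (p₂ := 0) _ _ _ _ rfl rfl rfl,
    btr_cons_of_d2_eq_pair (q := 1) (p₁ := 2) (p₂ := 4) _ _ _ _ rfl rfl (by simp), h2, h4,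
    btr_cons_of_d1_eq_none (q := 0) _ _ _ _ rfl hd0]
  have hbranches := firstSucc_eq_self
    (ts := [.node (.st 2) [t], .node (.st 4) [t]]) (by simp [OTree.succeeds_node_st, ht])
  rw [hbranches, firstSucc_eq_self
    (by simp [OTree.succeeds_node_st, OTree.succeeds_rejLeaf, ht]), starAltRun]

theorem succeeds_iterate_starAltRun (k : ℕ) : (starAltRun^[k] rejLeaf).succeeds = false := by
  induction k with
  | zero => exact OTree.succeeds_rejLeaf
  | succ k ih => rw [Function.iterate_succ_apply', succeeds_starAltRun, ih]

theorem two_pow_le_size_iterate_starAltRun (k : ℕ) : 2 ^ k ≤ (starAltRun^[k] rejLeaf).size := by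
  induction k with
  | zero => simp [rejLeaf, OTree.size_node]
  | succ k ih => rw [Function.iterate_succ_apply', size_starAltRun, pow_succ]; omega

theorem btr_aOrAStarJp_replicate_a_b (n : ℕ) :
    btr aOrAStarJp 3 (List.replicate n AB.a ++ [AB.b]) (fun _ => 0) =
      starAltRun^[n + 1] rejLeaf := by
  induction n with
  | zero =>
    exact btr_aOrAStarJp_three_cons _ _ _
      (fun C => btr_cons_of_d1_eq_none aOrAStarJp (q := 2) _ _ C rfl rfl)
      (fun C => btr_cons_of_d1_eq_none aOrAStarJp (q := 4) _ _ C rfl rfl)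
      OTree.succeeds_rejLeaf
  | succ n ih =>
    rw [List.replicate_succ, List.cons_append, Function.iterate_succ_apply', ← ih]
    exact btr_aOrAStarJp_three_cons _ _ _
      (fun C => btr_cons_of_d1_eq_some aOrAStarJp (q := 2) (q' := 3) _ _ C rfl rfl)
      (fun C => btr_cons_of_d1_eq_some aOrAStarJp (q := 4) (q' := 3) _ _ C rfl rfl)
      (ih ▸ succeeds_iterate_starAltRun (n + 1))

/-- For `E = (a|a)*`, the pNFA `Jp(E)` has exponential backtracking,
witnessed by the family `{aⁿb : n ∈ ℕ}`: the function
`n ↦ |btr_{Jp(E)}(aⁿb)|` is in `2^{Ω(n)}`. -/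
theorem statement7 :
    ExpGrowth (fun n =>
      (btrW (jp (RE.star (RE.alt (RE.ch AB.a) (RE.ch AB.a))))
        (List.replicate n AB.a ++ [AB.b])).size) := by
  refine ⟨2, one_lt_two, 0, fun n _ => ?_⟩
  have hrun : btrW aOrAStarJp (List.replicate n AB.a ++ [AB.b]) = starAltRun^[n + 1] rejLeaf :=
    btr_aOrAStarJp_replicate_a_b n
  have hsize : 2 ^ n ≤ (starAltRun^[n + 1] rejLeaf).size :=
    (Nat.pow_le_pow_right two_pos n.le_succ).trans (two_pow_le_size_iterate_starAltRun (n + 1))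
  show (2 : ℝ) ^ n ≤ (btrW aOrAStarJp (List.replicate n AB.a ++ [AB.b])).size
  rw [hrun]
  exact_mod_cast hsize
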